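/- arXiv:1205.0638 — 2 statements merged into one kernel-verified Lean document; each statement's English description precedes it below -/
import Mathlib

section
/- Let T have a Gamma(m-1, 1/α) distribution with m > 4 and α > 0. Then the mean squared error of the estimator m/T for α equals α² (m+6)/((m-2)(m-3)). -/
open MeasureTheory Real Set

/-! Expanding the square, `E[(c/T - α)²] = c² E[T⁻²] - 2cα E[T⁻¹] + α²`. Euler's integral gives the
moments `E[T^p] = τ^p Γ(ν+p) / Γ(ν)` of `T ~ Gamma(ν, τ)` for `p > -ν`, and the functional equation
of `Γ` turns the negative ones into `E[T⁻¹] = 1/(τ(ν-1))` and `E[T⁻²] = 1/(τ²(ν-1)(ν-2))`. -/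

-- Shape `ν` and scale `τ`, as in the statement; Mathlib's `gammaPDFReal` is parametrized by the rate.
noncomputable def gammaDensity (ν τ x : ℝ) : ℝ :=
  x ^ (ν - 1) * exp (-x / τ) / (Gamma ν * τ ^ ν)

lemma integral_rpow_mul_exp_neg_div_Ioi {a τ : ℝ} (ha : 0 < a) (hτ : 0 < τ) :
    ∫ x in Ioi (0 : ℝ), x ^ (a - 1) * exp (-x / τ) = τ ^ a * Gamma a := by
  have h := integral_rpow_mul_exp_neg_mul_Ioi ha (inv_pos.2 hτ)
  simpa only [one_div, inv_inv, inv_mul_eq_div, neg_div] using h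

lemma integrableOn_rpow_mul_exp_neg_div_Ioi {a τ : ℝ} (ha : 0 < a) (hτ : 0 < τ) :
    IntegrableOn (fun x : ℝ => x ^ (a - 1) * exp (-x / τ)) (Ioi 0) :=
  Integrable.of_integral_ne_zero <| by
    rw [integral_rpow_mul_exp_neg_div_Ioi ha hτ]
    exact (mul_pos (rpow_pos_of_pos hτ a) (Gamma_pos_of_pos ha)).ne'

lemma rpow_mul_gammaDensity (ν τ p : ℝ) {x : ℝ} (hx : 0 < x) :
    x ^ p * gammaDensity ν τ x = x ^ (ν + p - 1) * exp (-x / τ) / (Gamma ν * τ ^ ν) := by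
  rw [gammaDensity, show ν + p - 1 = p + (ν - 1) by ring, rpow_add hx, mul_div_assoc,
    mul_div_assoc, mul_assoc]

lemma integrableOn_rpow_mul_gammaDensity {ν τ p : ℝ} (hνp : 0 < ν + p) (hτ : 0 < τ) :
    IntegrableOn (fun x => x ^ p * gammaDensity ν τ x) (Ioi 0) :=
  IntegrableOn.congr_fun ((integrableOn_rpow_mul_exp_neg_div_Ioi hνp hτ).div_const _)
    (fun _ hx => (rpow_mul_gammaDensity ν τ p hx).symm) measurableSet_Ioi

lemma integral_rpow_mul_gammaDensity {ν τ p : ℝ} (hνp : 0 < ν + p) (hτ : 0 < τ) :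
    ∫ x in Ioi (0 : ℝ), x ^ p * gammaDensity ν τ x = τ ^ p * Gamma (ν + p) / Gamma ν := by
  rw [setIntegral_congr_fun measurableSet_Ioi (fun _ hx => rpow_mul_gammaDensity ν τ p hx),
    integral_div, integral_rpow_mul_exp_neg_div_Ioi hνp hτ, add_comm ν p, rpow_add hτ]
  have hτν : τ ^ ν ≠ 0 := (rpow_pos_of_pos hτ ν).ne'
  rw [add_comm p ν, mul_comm (τ ^ p), mul_assoc, mul_comm (Gamma ν), mul_div_mul_left _ _ hτν]

lemma Gamma_eq_sub_one_mul_Gamma_sub_one {s : ℝ} (hs : s ≠ 1) :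
    Gamma s = (s - 1) * Gamma (s - 1) := by
  simpa using Gamma_add_one (sub_ne_zero.2 hs)

lemma integral_sq_div_sub_mul_gammaDensity {ν τ : ℝ} (c α : ℝ) (hν : 2 < ν) (hτ : 0 < τ) :
    ∫ x in Ioi (0 : ℝ), (c / x - α) ^ 2 * gammaDensity ν τ x =
      c ^ 2 / (τ ^ 2 * (ν - 1) * (ν - 2)) - 2 * c * α / (τ * (ν - 1)) + α ^ 2 := by
  have expand : ∀ x : ℝ, (c / x - α) ^ 2 * gammaDensity ν τ x =
      c ^ 2 * (x ^ (-2 : ℝ) * gammaDensity ν τ x) - 2 * c * α * (x ^ (-1 : ℝ) * gammaDensity ν τ x)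
        + α ^ 2 * (x ^ (0 : ℝ) * gammaDensity ν τ x) := by
    intro x
    have h2 : x ^ (-2 : ℝ) = (x ^ 2)⁻¹ := by exact_mod_cast rpow_intCast x (-2)
    rw [h2, rpow_neg_one, rpow_zero]
    ring
  have integrable (p : ℝ) (hp : -ν < p) :
      IntegrableOn (fun x => x ^ p * gammaDensity ν τ x) (Ioi 0) :=
    integrableOn_rpow_mul_gammaDensity (by linarith) hτ
  have int2 := (integrable (-2) (by linarith)).const_mul (c ^ 2)
  have int1 := (integrable (-1) (by linarith)).const_mul (2 * c * α)
  have int0 := (integrable 0 (by linarith)).const_mul (α ^ 2)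
  simp_rw [expand]
  rw [integral_add (by exact int2.sub int1) int0, integral_sub int2 int1,
    integral_const_mul, integral_const_mul, integral_const_mul,
    integral_rpow_mul_gammaDensity (by linarith) hτ, integral_rpow_mul_gammaDensity (by linarith) hτ,
    integral_rpow_mul_gammaDensity (by linarith) hτ, ← sub_eq_add_neg, ← sub_eq_add_neg, add_zero,
    Gamma_eq_sub_one_mul_Gamma_sub_one (by linarith : ν ≠ 1),
    Gamma_eq_sub_one_mul_Gamma_sub_one (by linarith : ν - 1 ≠ 1),
    show ν - 1 - 1 = ν - 2 by ring]
  have hΓ : Gamma (ν - 2) ≠ 0 := (Gamma_pos_of_pos (by linarith)).ne'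
  have h1 : ν - 1 ≠ 0 := by linarith
  have h2 : ν - 2 ≠ 0 := by linarith
  rw [rpow_neg hτ.le, rpow_neg hτ.le, rpow_two, rpow_one, rpow_zero]
  field_simp

/-- If `T ~ Gamma(m-1, 1/α)` with `m > 4`, the MSE of the MLE `m/T` for `α` is
`α² (m+6)/((m-2)(m-3))`. -/
theorem mse_mle_pareto_shape (m : ℕ) (hm : 4 < m) (α : ℝ) (hα : 0 < α) :
    ∫ x in Ioi (0 : ℝ),
        ((m : ℝ) / x - α) ^ 2 *
          (x ^ ((m : ℝ) - 1 - 1) * Real.exp (-x / (1 / α)) /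
            (Real.Gamma ((m : ℝ) - 1) * (1 / α) ^ ((m : ℝ) - 1))) =
      α ^ 2 * ((m : ℝ) + 6) / (((m : ℝ) - 2) * ((m : ℝ) - 3)) := by
  have hm' : (5 : ℝ) ≤ m := by exact_mod_cast hm
  have hmse := integral_sq_div_sub_mul_gammaDensity (m : ℝ) α (by linarith : (2 : ℝ) < m - 1)
    (one_div_pos.2 hα)
  simp only [gammaDensity] at hmse
  rw [hmse, show (m : ℝ) - 1 - 1 = m - 2 by ring, show (m : ℝ) - 1 - 2 = m - 3 by ring]
  have h2 : (m : ℝ) - 2 ≠ 0 := by linarith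
  have h3 : (m : ℝ) - 3 ≠ 0 := by linarith
  field_simp
  ring
end

section
/- Let T_m denote the trial index at which the m-th record occurs in a sequence of i.i.d. continuous random variables. Then P(T_m = j) = (1/j!)·c(j-1, m-1) for j ≥ m, where c(n,k) is the unsigned Stirling number of the first kind defined by z(z+1)⋯(z+n-1) = Σ_k c(n,k) z^k. -/
/-!
Write `j = n + 1`. Almost surely `X 0, …, X n` are distinct, and then their relative order is
recorded by a unique permutation `τ` of `Fin (n + 1)` (`X a < X b ↔ τ a < τ b`); by
exchangeability each of the `(n + 1)!` permutations occurs with probability `1 / (n + 1)!`. Both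
the event that `n` is a record and the number of records depend only on `τ`, so the probability
is `1 / (n + 1)!` times the number of permutations with `τ (last n) = 0` and `m` left-to-right
minima. Deleting the last value and relabelling the others order-preservingly is a bijection
`Perm (Fin (n + 1)) ≃ Fin (n + 1) × Perm (Fin n)` under which the number of records drops by one
exactly when `τ (last n) = 0`; this yields the Stirling recurrence for the number of
permutations with `k` records.
-/

open MeasureTheory ProbabilityTheory Finset

/-- Unsigned Stirling numbers of the first kind: `z(z+1)⋯(z+n-1) = Σ_k c(n,k) z^k`,
via the standard recurrence `c(n+1,k+1) = n·c(n,k+1) + c(n,k)`. -/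
def stirlingFirst : ℕ → ℕ → ℕ
  | 0, 0 => 1
  | 0, _ + 1 => 0
  | _ + 1, 0 => 0
  | n + 1, k + 1 => n * stirlingFirst n (k + 1) + stirlingFirst n k

open scoped ENNReal Nat
open Equiv

section Records

variable {α β : Type*} [LinearOrder α] [LinearOrder β] {n : ℕ}

def IsRecord {ι : Type*} [LT ι] (x : ι → α) (i : ι) : Prop := ∀ i' < i, x i < x i'

instance (x : Fin n → α) : DecidablePred (IsRecord x) :=
  fun i => inferInstanceAs (Decidable (∀ i' < i, x i < x i'))

def recordCount (x : Fin n → α) : ℕ := #{i | IsRecord x i}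

theorem isRecord_congr {ι : Type*} [LT ι] {x : ι → α} {y : ι → β}
    (h : ∀ a b, x a < x b ↔ y a < y b) (i : ι) : IsRecord x i ↔ IsRecord y i :=
  forall₂_congr fun _ _ => h _ _

theorem recordCount_congr {x : Fin n → α} {y : Fin n → β}
    (h : ∀ a b, x a < x b ↔ y a < y b) : recordCount x = recordCount y := by
  simp only [recordCount, isRecord_congr h]

theorem isRecord_castSucc_iff (x : Fin (n + 1) → α) (i : Fin n) :
    IsRecord x i.castSucc ↔ IsRecord (x ∘ Fin.castSucc) i := by
  refine ⟨fun h i' hi' => h _ (Fin.castSucc_lt_castSucc_iff.mpr hi'), fun h i' hi' => ?_⟩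
  obtain ⟨i', rfl⟩ :=
    Fin.exists_castSucc_eq.mpr (Fin.ne_last_of_lt (hi'.trans (Fin.castSucc_lt_last i)))
  exact h i' (Fin.castSucc_lt_castSucc_iff.mp hi')

theorem recordCount_succ (x : Fin (n + 1) → α) :
    recordCount x =
      recordCount (x ∘ Fin.castSucc) + if IsRecord x (Fin.last n) then 1 else 0 := by
  simp only [recordCount, card_filter, Fin.sum_univ_castSucc, isRecord_castSucc_iff]

theorem card_filter_range_eq_recordCount (x : ℕ → α) (n : ℕ) :
    #{i ∈ range n | ∀ i' < i, x i < x i'} = recordCount fun i : Fin n => x i := by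
  rw [recordCount, ← Nat.Iio_eq_range, ← Fin.map_valEmbedding_univ, filter_map, card_map]
  refine congrArg card (filter_congr fun i _ => ⟨fun h i' hi' => h i' hi', fun h i' hi' => ?_⟩)
  exact h ⟨i', hi'.trans i.isLt⟩ hi'

theorem isRecord_last_iff_forall_lt (x : ℕ → α) (n : ℕ) :
    IsRecord (fun i : Fin (n + 1) => x i) (Fin.last n) ↔ ∀ i < n, x n < x i :=
  ⟨fun h i hi => h ⟨i, by omega⟩ (Fin.mk_lt_of_lt_val hi), fun h i hi => h i hi⟩

end Records

namespace Equiv.Perm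

variable {n : ℕ}

theorem isRecord_last_iff (τ : Perm (Fin (n + 1))) :
    IsRecord τ (Fin.last n) ↔ τ (Fin.last n) = 0 := by
  refine ⟨fun h => ?_, fun h i' hi' => ?_⟩
  · by_contra h0
    have hlt : τ.symm 0 < Fin.last n :=
      Fin.lt_last_iff_ne_last.mpr fun he => h0 (by rw [← he, apply_symm_apply])
    simpa using h _ hlt
  · rw [h, Fin.pos_iff_ne_zero, ← h, Ne, τ.injective.eq_iff]
    exact hi'.ne

/-- Forget the last value of `τ`, relabelling the remaining values order-preservingly. -/
def dropLast (τ : Perm (Fin (n + 1))) : Perm (Fin n) :=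
  (finSuccAboveOrderIso (Fin.last n)).toEquiv.trans
    ((τ.subtypeEquiv fun _ => not_congr τ.injective.eq_iff.symm).trans
      (finSuccAboveOrderIso (τ (Fin.last n))).symm.toEquiv)

theorem succAbove_dropLast (τ : Perm (Fin (n + 1))) (i : Fin n) :
    (τ (Fin.last n)).succAbove (dropLast τ i) = τ i.castSucc :=
  (congrArg Subtype.val ((finSuccAboveOrderIso (τ (Fin.last n))).apply_symm_apply _)).trans
    (by simp [finSuccAboveOrderIso_apply])

theorem dropLast_lt_dropLast_iff (τ : Perm (Fin (n + 1))) (a b : Fin n) :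
    dropLast τ a < dropLast τ b ↔ τ a.castSucc < τ b.castSucc := by
  rw [← succAbove_dropLast, ← succAbove_dropLast, Fin.succAbove_lt_succAbove_iff]

theorem recordCount_eq_recordCount_dropLast (τ : Perm (Fin (n + 1))) :
    recordCount τ = recordCount (dropLast τ) + if τ (Fin.last n) = 0 then 1 else 0 := by
  rw [recordCount_succ, recordCount_congr (dropLast_lt_dropLast_iff τ)]
  simp only [isRecord_last_iff]
  rfl

noncomputable def lastDropLastEquiv (n : ℕ) :
    Perm (Fin (n + 1)) ≃ Fin (n + 1) × Perm (Fin n) :=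
  Equiv.ofBijective (fun τ => (τ (Fin.last n), dropLast τ)) <| by
    refine (Fintype.bijective_iff_injective_and_card _).mpr ⟨fun τ τ' h => ?_, ?_⟩
    · simp only [Prod.mk.injEq] at h
      ext i
      induction i using Fin.lastCases with
      | last => rw [h.1]
      | cast i => rw [← succAbove_dropLast, ← succAbove_dropLast, h.1, h.2]
    · simp [Fintype.card_perm, Nat.factorial_succ]

theorem card_filter_last_dropLast (P : Fin (n + 1) → Perm (Fin n) → Prop)
    [∀ v, DecidablePred (P v)] :
    #{τ : Perm (Fin (n + 1)) | P (τ (Fin.last n)) (dropLast τ)} = ∑ v, #{σ | P v σ} := by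
  rw [card_equiv (lastDropLastEquiv n) (t := {p | P p.1 p.2}) (by simp [lastDropLastEquiv])]
  simp only [card_filter, Fintype.sum_prod_type]

theorem card_recordCount_succ (n k : ℕ) :
    #{τ : Perm (Fin (n + 1)) | recordCount τ = k} =
      #{σ : Perm (Fin n) | recordCount σ + 1 = k} +
        n * #{σ : Perm (Fin n) | recordCount σ = k} := by
  simp_rw [recordCount_eq_recordCount_dropLast]
  rw [card_filter_last_dropLast (fun v σ => recordCount σ + (if v = 0 then 1 else 0) = k),
    Fin.sum_univ_succ]
  simp [Fin.succ_ne_zero]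

theorem card_recordCount_eq_stirlingFirst (n k : ℕ) :
    #{σ : Perm (Fin n) | recordCount σ = k} = stirlingFirst n k := by
  induction n generalizing k with
  | zero => cases k <;> simp [recordCount, stirlingFirst]
  | succ n ih =>
    rw [card_recordCount_succ, ih]
    cases k with
    | zero => cases n <;> simp [stirlingFirst]
    | succ k => simp [stirlingFirst, ih, add_comm (n * _)]

theorem card_isRecord_last_recordCount (n k : ℕ) :
    #{τ : Perm (Fin (n + 1)) | IsRecord τ (Fin.last n) ∧ recordCount τ = k + 1} =
      stirlingFirst n k := by
  simp_rw [isRecord_last_iff, recordCount_eq_recordCount_dropLast]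
  rw [card_filter_last_dropLast
      (fun v σ => v = 0 ∧ recordCount σ + (if v = 0 then 1 else 0) = k + 1),
    Fin.sum_univ_succ]
  simp [Fin.succ_ne_zero, card_recordCount_eq_stirlingFirst]

end Equiv.Perm

theorem ProbabilityTheory.IndepFun.ae_ne {Ω β : Type*} [MeasurableSpace Ω]
    {μ : Measure Ω} [IsFiniteMeasure μ] [MeasurableSpace β] [MeasurableEq β] {f g : Ω → β}
    (hfg : IndepFun f g μ) (hf : AEMeasurable f μ) (hg : AEMeasurable g μ)
    [NullSingletonClass (μ.map g)] : ∀ᵐ ω ∂μ, f ω ≠ g ω := by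
  simp only [ae_iff, not_not]
  have hdiag : MeasurableSet (Set.diagonal β) := measurableSet_diagonal
  have hslice (x : β) : Prod.mk x ⁻¹' Set.diagonal β = {x} := by ext; simp [eq_comm]
  rw [show {ω | f ω = g ω} = (fun ω => (f ω, g ω)) ⁻¹' Set.diagonal β from rfl,
    ← Measure.map_apply_of_aemeasurable (hf.prodMk hg) hdiag,
    (indepFun_iff_map_prod_eq_prod_map_map hf hg).mp hfg, Measure.prod_apply hdiag]
  simp [hslice]

theorem ProbabilityTheory.iIndepFun.map_fin_eq_pi {Ω α : Type*} [MeasurableSpace Ω]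
    [MeasurableSpace α] {μ : Measure Ω} [IsProbabilityMeasure μ] {ν : Measure α} {X : ℕ → Ω → α}
    (hind : iIndepFun X μ) (hX : ∀ i, Measurable (X i)) (hid : ∀ i, μ.map (X i) = ν) (n : ℕ) :
    μ.map (fun ω (i : Fin n) => X i ω) = Measure.pi fun _ => ν :=
  (iIndepFun.map_fun_eq_pi_map (f := fun i : Fin n => X i) (fun i => (hX i).aemeasurable)
    (hind.precomp Fin.val_injective)).trans (by simp [hid])

namespace MeasureTheory.Measure

theorem ae_injective_pi {ι α : Type*} [Fintype ι] [MeasurableSpace α] [MeasurableEq α]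
    (ν : Measure α) [IsProbabilityMeasure ν] [NullSingletonClass ν] :
    ∀ᵐ x ∂Measure.pi (fun _ : ι => ν), Function.Injective x := by
  have hlaw (b : ι) : (Measure.pi fun _ : ι => ν).map (Function.eval b) = ν :=
    (measurePreserving_eval _ b).map_eq
  refine ae_all_iff.2 fun a => ae_all_iff.2 fun b => ?_
  rcases eq_or_ne a b with rfl | hab
  · exact Filter.Eventually.of_forall fun _ _ => rfl
  have : NullSingletonClass ((Measure.pi fun _ : ι => ν).map (Function.eval b)) := by
    rw [hlaw]; infer_instance
  exact (((iIndepFun_pi fun _ => aemeasurable_id).indepFun hab).ae_ne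
    (measurable_pi_apply a).aemeasurable (measurable_pi_apply b).aemeasurable).mono
      fun _ hne heq => absurd heq hne

end MeasureTheory.Measure

section RankedBy

variable {α : Type*} [LinearOrder α] {n : ℕ}

def rankedBy (τ : Perm (Fin n)) : Set (Fin n → α) := {x | ∀ a b, x a < x b ↔ τ a < τ b}

theorem mem_rankedBy_iff_strictMono {τ : Perm (Fin n)} {x : Fin n → α} :
    x ∈ rankedBy τ ↔ StrictMono (x ∘ τ.symm) := by
  refine ⟨fun hx a b hab => ?_, fun hx a b => ?_⟩
  · exact (hx _ _).2 (by simpa using hab)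
  · simpa using (hx.lt_iff_lt (a := τ a) (b := τ b))

theorem eq_of_mem_rankedBy {τ τ' : Perm (Fin n)} {x : Fin n → α} (hx : x ∈ rankedBy τ)
    (hx' : x ∈ rankedBy τ') : τ = τ' := by
  have hmono : StrictMono (τ' ∘ τ.symm) := fun a b hab => by
    rw [Function.comp_apply, Function.comp_apply, ← hx', hx]
    simpa using hab
  ext a : 1
  simpa using (congrFun hmono.eq_id (τ a)).symm

theorem mem_rankedBy_sort_symm {x : Fin n → α} (hx : Function.Injective x) :
    x ∈ rankedBy (Tuple.sort x).symm := by
  rw [mem_rankedBy_iff_strictMono, symm_symm]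
  exact (Tuple.monotone_sort x).strictMono_of_injective (hx.comp (Tuple.sort x).injective)

theorem pairwise_disjoint_rankedBy :
    Pairwise (Function.onFun Disjoint (rankedBy : Perm (Fin n) → Set (Fin n → α))) :=
  fun _ _ hne => Set.disjoint_left.2 fun _ hx hx' => hne (eq_of_mem_rankedBy hx hx')

variable [MeasurableSpace α] [TopologicalSpace α] [OpensMeasurableSpace α]
  [OrderClosedTopology α] [SecondCountableTopology α]

theorem measurableSet_rankedBy (τ : Perm (Fin n)) :
    MeasurableSet (rankedBy τ : Set (Fin n → α)) := by
  simp only [rankedBy, Set.ofPred_forall]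
  refine .iInter fun a => .iInter fun b => ?_
  by_cases h : τ a < τ b
  · simpa [h] using measurableSet_lt (f := fun x : Fin n → α => x a)
      (measurable_pi_apply a) (measurable_pi_apply b)
  · simpa [h] using measurableSet_le (f := fun x : Fin n → α => x b)
      (measurable_pi_apply b) (measurable_pi_apply a)

variable (ν : Measure α)

theorem measure_pi_rankedBy_eq_measure_pi_rankedBy_one [SigmaFinite ν] (τ : Perm (Fin n)) :
    Measure.pi (fun _ : Fin n => ν) (rankedBy τ) =
      Measure.pi (fun _ : Fin n => ν) (rankedBy 1) := by
  have hmp := measurePreserving_arrowCongr' (fun _ => ν) (fun _ => ν) τ (MeasurableEquiv.refl α)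
    fun _ => MeasurePreserving.id ν
  rw [← hmp.measure_preimage (measurableSet_rankedBy 1).nullMeasurableSet]
  congr 1
  ext x
  rw [Set.mem_preimage, mem_rankedBy_iff_strictMono, mem_rankedBy_iff_strictMono]
  rfl

variable [IsProbabilityMeasure ν] [NullSingletonClass ν]

theorem measure_pi_rankedBy (τ : Perm (Fin n)) :
    Measure.pi (fun _ : Fin n => ν) (rankedBy τ) = (n ! : ℝ≥0∞)⁻¹ := by
  have hcover : Measure.pi (fun _ : Fin n => ν) (⋃ τ, rankedBy τ) = 1 :=
    ((ae_iff_measure_eq (.iUnion fun τ => (measurableSet_rankedBy τ).nullMeasurableSet)).1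
      ((Measure.ae_injective_pi ν).mono fun x hx =>
        Set.mem_iUnion.2 ⟨_, mem_rankedBy_sort_symm hx⟩)).trans measure_univ
  rw [measure_iUnion pairwise_disjoint_rankedBy measurableSet_rankedBy, tsum_fintype,
    Fintype.sum_congr _ _ (measure_pi_rankedBy_eq_measure_pi_rankedBy_one ν), sum_const,
    card_univ, Fintype.card_perm, Fintype.card_fin, nsmul_eq_mul, mul_comm] at hcover
  rw [measure_pi_rankedBy_eq_measure_pi_rankedBy_one]
  exact ENNReal.eq_inv_of_mul_eq_one_left hcover

theorem ae_eq_biUnion_rankedBy {E : Set (Fin n → α)} {S : Finset (Perm (Fin n))}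
    (hS : ∀ τ, ∀ x ∈ rankedBy τ, x ∈ E ↔ τ ∈ S) :
    E =ᵐ[Measure.pi fun _ : Fin n => ν] ⋃ τ ∈ S, rankedBy τ := by
  refine Filter.eventuallyEq_set.2 ((Measure.ae_injective_pi ν).mono fun x hx => ?_)
  have hx := mem_rankedBy_sort_symm hx
  simp only [Set.mem_iUnion, exists_prop, hS _ x hx]
  exact ⟨fun h => ⟨_, h, hx⟩, fun ⟨τ, hτ, hxτ⟩ => eq_of_mem_rankedBy hxτ hx ▸ hτ⟩

theorem measure_pi_eq_card_mul_inv_factorial {E : Set (Fin n → α)} (S : Finset (Perm (Fin n)))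
    (hS : ∀ τ, ∀ x ∈ rankedBy τ, x ∈ E ↔ τ ∈ S) :
    Measure.pi (fun _ : Fin n => ν) E = #S * (n ! : ℝ≥0∞)⁻¹ := by
  rw [measure_congr (ae_eq_biUnion_rankedBy ν hS),
    measure_biUnion_finset (pairwise_disjoint_rankedBy.set_pairwise _)
      fun τ _ => measurableSet_rankedBy τ,
    sum_congr rfl fun τ _ => measure_pi_rankedBy ν τ, sum_const, nsmul_eq_mul]

theorem nullMeasurableSet_of_forall_rankedBy {E : Set (Fin n → α)} (S : Finset (Perm (Fin n)))
    (hS : ∀ τ, ∀ x ∈ rankedBy τ, x ∈ E ↔ τ ∈ S) :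
    NullMeasurableSet E (Measure.pi fun _ : Fin n => ν) :=
  (S.measurableSet_biUnion fun τ _ => measurableSet_rankedBy τ).nullMeasurableSet.congr
    (ae_eq_biUnion_rankedBy ν hS).symm

end RankedBy

/-- Trial `j` corresponds to index `j - 1`; observation `i` is a (lower) record when it is strictly
smaller than all previous observations. -/
theorem record_time_pmf
    {Ω : Type*} [MeasurableSpace Ω] (μ : Measure Ω) [IsProbabilityMeasure μ]
    (X : ℕ → Ω → ℝ) (hX : ∀ i, Measurable (X i))
    (ν : Measure ℝ) [NullSingletonClass ν]
    (hid : ∀ i, μ.map (X i) = ν)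
    (hind : iIndepFun X μ)
    (m j : ℕ) (hm : 1 ≤ m) (hj : m ≤ j) :
    μ {ω | (∀ i < j - 1, X (j - 1) ω < X i ω) ∧
        ((Finset.range j).filter (fun i => ∀ i' < i, X i ω < X i' ω)).card = m} =
      ENNReal.ofReal (stirlingFirst (j - 1) (m - 1) / Nat.factorial j) := by
  obtain ⟨n, rfl⟩ : ∃ n, j = n + 1 := ⟨j - 1, by omega⟩
  obtain ⟨k, rfl⟩ : ∃ k, m = k + 1 := ⟨m - 1, by omega⟩
  have : IsProbabilityMeasure ν := hid 0 ▸ Measure.isProbabilityMeasure_map (hX 0).aemeasurable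
  set Y : Ω → Fin (n + 1) → ℝ := fun ω i => X i ω
  have hlaw : μ.map Y = Measure.pi fun _ => ν := hind.map_fin_eq_pi hX hid (n + 1)
  set E : Set (Fin (n + 1) → ℝ) := {x | IsRecord x (Fin.last n) ∧ recordCount x = k + 1}
  have hevent : {ω | (∀ i < n, X n ω < X i ω) ∧
      #{i ∈ range (n + 1) | ∀ i' < i, X i ω < X i' ω} = k + 1} = Y ⁻¹' E := by
    ext ω
    rw [Set.mem_ofPred_eq, card_filter_range_eq_recordCount,
      ← isRecord_last_iff_forall_lt (fun i => X i ω)]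
    rfl
  have hpattern (τ : Perm (Fin (n + 1))) (x) (hx : x ∈ rankedBy τ) :
      x ∈ E ↔ τ ∈ ({τ | IsRecord τ (Fin.last n) ∧ recordCount τ = k + 1} :
        Finset (Perm (Fin (n + 1)))) := by
    simp [E, isRecord_congr hx, recordCount_congr hx]
  rw [Nat.add_sub_cancel, Nat.add_sub_cancel, hevent,
    ← Measure.map_apply₀ (measurable_pi_lambda Y fun i => hX i).aemeasurable
      (hlaw ▸ nullMeasurableSet_of_forall_rankedBy ν _ hpattern),
    hlaw, measure_pi_eq_card_mul_inv_factorial ν _ hpattern,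
    Perm.card_isRecord_last_recordCount, div_eq_mul_inv, ENNReal.ofReal_mul (by positivity),
    ENNReal.ofReal_inv_of_pos (by positivity), ENNReal.ofReal_natCast, ENNReal.ofReal_natCast]
end
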